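/- arXiv:2106.05480 — 3 statements merged into one kernel-verified Lean document; each statement's English description precedes it below -/
import Mathlib

section
/- Let f: ℝ^d → ℝ be coordinate-wise separable, f(x) = ∑_{i∈[d]} f_i(x_i), with f(x) = f(−x) for all x, and suppose f₁ is L-smooth (|f₁''| ≤ L everywhere). Let π* be the distribution with density proportional to exp(−f) and suppose m ≤ E_{x∼π*}[x₁²] for some m > 0. Then the spectral gap of the MALA Markov chain with step size h targeting π* is at most (L²·h²·E_{π*}[x₁²] + 2h)/m; in particular, if f₁ is O(1)-smooth and E_{π*}[x₁²] = Θ(1), the spectral gap is O(h + h²). -/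
open MeasureTheory Real

noncomputable section

abbrev E (d : ℕ) := EuclideanSpace ℝ (Fin d)

/-- The standard Gaussian `N(0, I_d)` on `ℝ^d`. -/
def stdGaussian (d : ℕ) : Measure (E d) :=
  (Measure.pi fun _ : Fin d => ProbabilityTheory.gaussianReal 0 1).map (MeasurableEquiv.toLp 2 (Fin d → ℝ))

/-- The probability distribution with density proportional to `exp (-f)`. -/
def targetMeasure {d : ℕ} (f : E d → ℝ) : Measure (E d) :=
  ((volume.withDensity fun x => ENNReal.ofReal (Real.exp (-f x))) Set.univ)⁻¹ •
    volume.withDensity fun x => ENNReal.ofReal (Real.exp (-f x))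

/-- The MALA proposal: `y = x - h ∇f(x) + √(2h) g`. -/
def malaPropose {d : ℕ} (f : E d → ℝ) (h : ℝ) (x g : E d) : E d :=
  x - h • gradient f x + Real.sqrt (2 * h) • g

/-- The MALA acceptance probability. -/
def malaAccept {d : ℕ} (f : E d → ℝ) (h : ℝ) (x y : E d) : ℝ :=
  min 1 (Real.exp (f x - f y +
    (1 / (4 * h)) * (‖y - (x - h • gradient f x)‖ ^ 2 - ‖x - (y - h • gradient f y)‖ ^ 2)))

/-- The MALA transition kernel with step size `h` targeting `∝ exp (-f)`. -/
def malaKernel {d : ℕ} (f : E d → ℝ) (h : ℝ) (x : E d) : Measure (E d) :=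
  Measure.map (malaPropose f h x)
    ((stdGaussian d).withDensity fun g =>
      ENNReal.ofReal (malaAccept f h x (malaPropose f h x g)))
  + (((stdGaussian d).withDensity fun g =>
      ENNReal.ofReal (1 - malaAccept f h x (malaPropose f h x g))) Set.univ) • Measure.dirac x

def var {d : ℕ} (μ : Measure (E d)) (g : E d → ℝ) : ℝ :=
  ∫ x, (g x - ∫ y, g y ∂μ) ^ 2 ∂μ

def dirichletForm {d : ℕ} (μ : Measure (E d)) (T : E d → Measure (E d)) (g : E d → ℝ) : ℝ :=
  (1 / 2) * ∫ x, ∫ y, (g x - g y) ^ 2 ∂(T x) ∂μ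

def spectralGap {d : ℕ} (μ : Measure (E d)) (T : E d → Measure (E d)) : ℝ :=
  sInf {r | ∃ g : E d → ℝ, 0 < var μ g ∧ r = dirichletForm μ T g / var μ g}


section MalaAux
open ProbabilityTheory ENNReal

lemma mala_gpdf_eq (t : ℝ) : gaussianPDFReal 0 1 t = (√(2*π))⁻¹ * rexp (-(1/2) * t^2) := by
  rw [gaussianPDFReal]; norm_num; left; ring_nf

lemma mala_gpdf_nonneg (t : ℝ) : 0 ≤ gaussianPDFReal 0 1 t := gaussianPDFReal_nonneg 0 1 t

lemma mala_gpdf_even (t : ℝ) : gaussianPDFReal 0 1 (-t) = gaussianPDFReal 0 1 t := by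
  rw [mala_gpdf_eq, mala_gpdf_eq]; ring_nf

lemma mala_int_gpdf : ∫ t, gaussianPDFReal 0 1 t = 1 := integral_gaussianPDFReal_eq_one 0 one_ne_zero

lemma mala_integrable_gpdf : Integrable (gaussianPDFReal 0 1) := integrable_gaussianPDFReal 0 1

lemma mala_integrable_t_gpdf : Integrable (fun t : ℝ => t * gaussianPDFReal 0 1 t) := by
  have h : (fun t : ℝ => t * gaussianPDFReal 0 1 t)
      = fun t : ℝ => (√(2*π))⁻¹ * (t * rexp (-(1/2) * t^2)) := by
    funext t; rw [mala_gpdf_eq]; ring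
  rw [h]
  exact (integrable_mul_exp_neg_mul_sq (by norm_num)).const_mul _

lemma mala_integrable_t2_gpdf : Integrable (fun t : ℝ => t^2 * gaussianPDFReal 0 1 t) := by
  have h : (fun t : ℝ => t^2 * gaussianPDFReal 0 1 t)
      = fun t : ℝ => (√(2*π))⁻¹ * (t^2 * rexp (-(1/2) * t^2)) := by
    funext t; rw [mala_gpdf_eq]; ring
  rw [h]
  have := integrable_rpow_mul_exp_neg_mul_sq (b := 1/2) (by norm_num) (s := 2) (by norm_num)
  exact (by simpa [Real.rpow_natCast] using this :
    Integrable (fun t : ℝ => t^2 * rexp (-(1/2)*t^2))).const_mul _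

lemma mala_int_t_gpdf : ∫ t, t * gaussianPDFReal 0 1 t = 0 := by
  set u := fun t : ℝ => t * gaussianPDFReal 0 1 t with hu
  have emb : MeasurableEmbedding (Neg.neg : ℝ → ℝ) :=
    (Homeomorph.neg ℝ).isClosedEmbedding.measurableEmbedding
  have h := (Measure.measurePreserving_neg (volume : Measure ℝ)).integral_comp emb u
  have hodd : ∀ t, u (-t) = - u t := by
    intro t; simp only [hu]; rw [mala_gpdf_even]; ring
  simp only [hodd] at h
  rw [integral_neg] at h
  linarith [h]

lemma mala_int_t2_gpdf_le : ∫ t, t^2 * gaussianPDFReal 0 1 t ≤ 2 := by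
  have key : ∀ t : ℝ, t^2 * gaussianPDFReal 0 1 t
      ≤ ((√(2*π))⁻¹ * (3 / rexp 1)) * rexp (-(1/6) * t^2) := by
    intro t
    rw [mala_gpdf_eq]
    have h1 : t^2/3 ≤ rexp (t^2/3 - 1) := by
      have := Real.add_one_le_exp (t^2/3 - 1); linarith
    have h2 : t^2 * rexp (-(1/2) * t^2) ≤ (3 / rexp 1) * rexp (-(1/6) * t^2) := by
      have hsplit : rexp (-(1/2) * t^2) = rexp (-(1/3) * t^2) * rexp (-(1/6) * t^2) := by
        rw [← Real.exp_add]; ring_nf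
      have h3 : t^2 * rexp (-(1/3) * t^2) ≤ 3 / rexp 1 := by
        have h4 : t^2 ≤ 3 * (rexp (t^2/3) / rexp 1) := by
          have h5 : rexp (t^2/3 - 1) = rexp (t^2/3) / rexp 1 := by
            rw [Real.exp_sub]
          rw [h5] at h1; linarith
        have h6 : rexp (-(1/3) * t^2) = (rexp (t^2/3))⁻¹ := by
          rw [← Real.exp_neg]; ring_nf
        rw [div_eq_mul_inv] at h4
        rw [h6]
        have hep := Real.exp_pos (t^2/3)
        have he1 := Real.exp_pos (1:ℝ)
        rw [div_eq_mul_inv]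
        calc t^2 * (rexp (t^2/3))⁻¹ ≤ (3 * rexp (t^2/3) * (rexp 1)⁻¹) * (rexp (t^2/3))⁻¹ := by
              apply mul_le_mul_of_nonneg_right (by rw [mul_assoc]; exact h4) (by positivity)
          _ = 3 * (rexp 1)⁻¹ := by field_simp
      calc t^2 * rexp (-(1/2) * t^2) = (t^2 * rexp (-(1/3) * t^2)) * rexp (-(1/6) * t^2) := by
            rw [hsplit]; ring
        _ ≤ (3 / rexp 1) * rexp (-(1/6) * t^2) := by
            apply mul_le_mul_of_nonneg_right h3 (Real.exp_pos _).le
    calc t^2 * ((√(2*π))⁻¹ * rexp (-(1/2)*t^2)) = (√(2*π))⁻¹ * (t^2 * rexp (-(1/2)*t^2)) := by ring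
      _ ≤ (√(2*π))⁻¹ * ((3 / rexp 1) * rexp (-(1/6) * t^2)) := by
          apply mul_le_mul_of_nonneg_left h2 (by positivity)
      _ = ((√(2*π))⁻¹ * (3 / rexp 1)) * rexp (-(1/6) * t^2) := by ring
  have hint2 : Integrable (fun t : ℝ => ((√(2*π))⁻¹ * (3 / rexp 1)) * rexp (-(1/6) * t^2)) := by
    have : Integrable (fun t : ℝ => rexp (-(1/6) * t^2)) := integrable_exp_neg_mul_sq (by norm_num)
    exact this.const_mul _
  have hle := integral_mono mala_integrable_t2_gpdf hint2 key
  rw [integral_const_mul, integral_gaussian] at hle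
  have hval : (√(2*π))⁻¹ * (3 / rexp 1) * √(π / (1/6)) = 3 * √3 / rexp 1 := by
    have h6 : π / (1/6) = 3 * (2*π) := by ring
    rw [h6, Real.sqrt_mul (by norm_num)]
    have h2pi : (0:ℝ) < √(2*π) := Real.sqrt_pos.mpr (by positivity)
    field_simp
    rw [show 3 * 2 * π = 2 * π * 3 by ring, Real.sqrt_mul (show (0:ℝ) ≤ 2 * π by positivity) 3,
      Real.sqrt_mul (show (0:ℝ) ≤ 2 by norm_num) π]
  rw [hval] at hle
  have hfin : 3 * √3 / rexp 1 ≤ 2 := by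
    rw [div_le_iff₀ (Real.exp_pos 1)]
    nlinarith [Real.sq_sqrt (show (0:ℝ) ≤ 3 by norm_num), Real.sqrt_nonneg 3,
      Real.exp_one_gt_d9]
  linarith

lemma mala_gauss_quad (a b : ℝ) :
    ∫⁻ t, ENNReal.ofReal ((a + b * t)^2) ∂(gaussianReal 0 1) ≤ ENNReal.ofReal (a^2 + 2*b^2) := by
  rw [gaussianReal_of_var_ne_zero 0 one_ne_zero]
  rw [lintegral_withDensity_eq_lintegral_mul _ (measurable_gaussianPDF 0 1)
    ((Measurable.ennreal_ofReal (by fun_prop)) : Measurable fun t : ℝ => ENNReal.ofReal ((a + b * t) ^ 2))]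
  have heq : (fun t => gaussianPDF 0 1 t * ENNReal.ofReal ((a + b * t)^2))
      = fun t => ENNReal.ofReal (gaussianPDFReal 0 1 t * (a + b * t)^2) := by
    funext t
    rw [gaussianPDF, ← ENNReal.ofReal_mul (mala_gpdf_nonneg t)]
  have hint : Integrable (fun t : ℝ => gaussianPDFReal 0 1 t * (a + b * t)^2) := by
    have : (fun t : ℝ => gaussianPDFReal 0 1 t * (a + b * t)^2)
        = fun t : ℝ => a^2 * gaussianPDFReal 0 1 t + (2*a*b) * (t * gaussianPDFReal 0 1 t)
          + b^2 * (t^2 * gaussianPDFReal 0 1 t) := by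
      funext t; ring
    rw [this]
    exact ((mala_integrable_gpdf.const_mul _).add (mala_integrable_t_gpdf.const_mul _)).add
      (mala_integrable_t2_gpdf.const_mul _)
  calc (∫⁻ t, (fun t => gaussianPDF 0 1 t * ENNReal.ofReal ((a + b * t)^2)) t)
      = ENNReal.ofReal (∫ t, gaussianPDFReal 0 1 t * (a + b * t)^2) := by
        rw [heq, ← ofReal_integral_eq_lintegral_ofReal hint
          (ae_of_all _ fun t => mul_nonneg (mala_gpdf_nonneg t) (sq_nonneg _))]
    _ ≤ ENNReal.ofReal (a^2 + 2*b^2) := by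
        apply ENNReal.ofReal_le_ofReal
        have hfe : (fun t : ℝ => gaussianPDFReal 0 1 t * (a + b * t)^2)
            = fun t : ℝ => a^2 * gaussianPDFReal 0 1 t + (2*a*b) * (t * gaussianPDFReal 0 1 t)
              + b^2 * (t^2 * gaussianPDFReal 0 1 t) := by
          funext t; ring
        rw [hfe]
        have e1 := integral_add (μ := (volume : Measure ℝ))
          ((mala_integrable_gpdf.const_mul (a^2)).add (mala_integrable_t_gpdf.const_mul (2*a*b)))
          (mala_integrable_t2_gpdf.const_mul (b^2))
        have e2 := integral_add (μ := (volume : Measure ℝ))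
          (mala_integrable_gpdf.const_mul (a^2)) (mala_integrable_t_gpdf.const_mul (2*a*b))
        simp only [Pi.add_apply] at e1 e2
        rw [e1, e2, integral_const_mul, integral_const_mul, integral_const_mul, mala_int_gpdf,
          mala_int_t_gpdf, mul_one, mul_zero, add_zero]
        nlinarith [mala_int_t2_gpdf_le, sq_nonneg b]

lemma mala_pi_map_eval (d : ℕ) [NeZero d] :
    (Measure.pi fun _ : Fin d => gaussianReal 0 1).map (fun x => x 0) = gaussianReal 0 1 := by
  ext s hs
  rw [Measure.map_apply (measurable_pi_apply 0) hs]
  have hpre : (fun x : Fin d → ℝ => x 0) ⁻¹' s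
      = Set.pi Set.univ (fun i => if i = 0 then s else Set.univ) := by
    ext x
    simp only [Set.mem_preimage, Set.mem_pi, Set.mem_univ, forall_true_left]
    constructor
    · intro hx i; by_cases hi : i = 0 <;> simp [hi, hx]
    · intro hx; have := hx 0; simpa using this
  rw [hpre, Measure.pi_pi]
  have : ∀ i : Fin d, (gaussianReal 0 1) (if i = 0 then s else Set.univ)
      = if i = 0 then (gaussianReal 0 1) s else 1 := by
    intro i; by_cases hi : i = 0 <;> simp [hi]
  simp only [this]
  rw [Finset.prod_ite_eq' Finset.univ (0 : Fin d) (fun _ => (gaussianReal 0 1) s)]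
  simp

lemma mala_lintegral_stdGaussian_coord (d : ℕ) [NeZero d] (φ : ℝ → ℝ≥0∞) (hφ : Measurable φ) :
    ∫⁻ g, φ (g 0) ∂(stdGaussian d) = ∫⁻ t, φ t ∂(gaussianReal 0 1) := by
  have hm : Measurable fun g : E d => φ (g 0) :=
    hφ.comp ((measurable_pi_apply 0).comp (MeasurableEquiv.toLp 2 (Fin d → ℝ)).symm.measurable)
  rw [_root_.stdGaussian, lintegral_map hm (MeasurableEquiv.toLp 2 (Fin d → ℝ)).measurable]
  have : ∀ x : Fin d → ℝ, ((MeasurableEquiv.toLp 2 (Fin d → ℝ)) x) 0 = x 0 :=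
    fun _ => rfl
  simp only [this]
  have h2 : ∫⁻ t, φ t ∂(gaussianReal 0 1)
      = ∫⁻ a, φ (a 0) ∂(Measure.pi fun _ : Fin d => gaussianReal 0 1) := by
    conv_lhs => rw [← mala_pi_map_eval d]
    rw [lintegral_map hφ (measurable_pi_apply 0)]
  rw [h2]

lemma mala_deriv_bound (f1 : ℝ → ℝ) (L : ℝ) (hC : ContDiff ℝ 2 f1)
    (hL : ∀ c, |deriv (deriv f1) c| ≤ L) (heven : ∀ t, f1 t = f1 (-t)) (s : ℝ) :
    |deriv f1 s| ≤ L * |s| := by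
  have hC1 : ContDiff ℝ 1 (deriv f1) := by
    have h2 : ContDiff ℝ ((1 : ℕ) + 1) f1 := by exact_mod_cast hC
    exact (contDiff_succ_iff_deriv.mp h2).2.2
  have hd2 : Differentiable ℝ (deriv f1) := hC1.differentiable one_ne_zero
  have hzero : deriv f1 0 = 0 := by
    have h1 : deriv (fun t => f1 (-t)) 0 = -deriv f1 0 := by
      rw [deriv_comp_neg]; simp
    have h2 : (fun t => f1 (-t)) = f1 := by funext t; rw [← heven]
    rw [h2] at h1
    linarith
  have := Convex.norm_image_sub_le_of_norm_deriv_le (𝕜 := ℝ) (f := deriv f1) (s := Set.univ)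
    (fun x _ => hd2 x) (fun x _ => by simpa using hL x) convex_univ (Set.mem_univ 0)
    (Set.mem_univ s)
  simpa [hzero] using this

lemma mala_grad_coord (d : ℕ) [NeZero d] (fi : Fin d → ℝ → ℝ) (f : E d → ℝ)
    (hf : ∀ x : E d, f x = ∑ i, fi i (x i)) (hC : ContDiff ℝ 2 (fi 0)) (x : E d) :
    (gradient f x) 0 = 0 ∨ (gradient f x) 0 = deriv (fi 0) (x 0) := by
  by_cases hd : DifferentiableAt ℝ f x
  · right
    have hcoord : (gradient f x) 0 = fderiv ℝ f x (EuclideanSpace.single 0 1) := by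
      have h1 : (inner ℝ (gradient f x) (EuclideanSpace.single (0 : Fin d) (1:ℝ)) : ℝ)
          = fderiv ℝ f x (EuclideanSpace.single 0 1) := by
        rw [gradient]
        exact InnerProductSpace.toDual_symm_apply
      rw [← h1, real_inner_comm, EuclideanSpace.inner_single_left]
      simp
    rw [hcoord]
    set v : E d := EuclideanSpace.single (0 : Fin d) (1:ℝ) with hv
    have hcurve : HasDerivAt (fun t : ℝ => x + t • v) v 0 := by
      simpa using ((hasDerivAt_id (0:ℝ)).smul_const v).const_add x
    have hcomp : HasDerivAt (fun t : ℝ => f (x + t • v)) (fderiv ℝ f x v) 0 := by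
      have hfx : HasFDerivAt f (fderiv ℝ f x) ((fun t : ℝ => x + t • v) 0) := by
        simpa using hd.hasFDerivAt
      exact hfx.comp_hasDerivAt 0 hcurve
    have heq : (fun t : ℝ => f (x + t • v))
        = fun t : ℝ => fi 0 (x 0 + t) + ∑ i ∈ Finset.univ.erase 0, fi i (x i) := by
      funext t
      rw [hf]
      have hcoords : ∀ i : Fin d, (x + t • v) i = if i = 0 then x 0 + t else x i := by
        intro i
        by_cases hi : i = 0
        · subst hi
          simp [hv, PiLp.add_apply, PiLp.smul_apply, EuclideanSpace.single_apply]
        · simp [hi, hv, PiLp.add_apply, PiLp.smul_apply, EuclideanSpace.single_apply]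
      rw [← Finset.add_sum_erase _ _ (Finset.mem_univ (0 : Fin d))]
      congr 1
      · rw [hcoords]; simp
      · apply Finset.sum_congr rfl
        intro i hi
        rw [hcoords i, if_neg (Finset.ne_of_mem_erase hi)]
    have hder2 : HasDerivAt (fun t : ℝ => fi 0 (x 0 + t) + ∑ i ∈ Finset.univ.erase 0, fi i (x i))
        (deriv (fi 0) (x 0)) 0 := by
      have hfd : HasDerivAt (fi 0) (deriv (fi 0) (x 0)) (x 0) :=
        ((hC.differentiable (by norm_num)) (x 0)).hasDerivAt
      have hin : HasDerivAt (fun t : ℝ => x 0 + t) 1 0 := by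
        simpa using (hasDerivAt_id (0:ℝ)).const_add (x 0)
      have hfd' : HasDerivAt (fi 0) (deriv (fi 0) (x 0)) ((fun t : ℝ => x 0 + t) 0) := by
        simpa using hfd
      have := HasDerivAt.comp (0:ℝ) hfd' hin
      simpa using this.add_const (∑ i ∈ Finset.univ.erase 0, fi i (x i))
    rw [heq] at hcomp
    exact hcomp.unique hder2
  · left
    rw [gradient, fderiv_zero_of_not_differentiableAt hd]
    simp

lemma mala_target_neg_invariant {d : ℕ} (f : E d → ℝ) (hsymm : ∀ x : E d, f x = f (-x)) :
    (targetMeasure f).map (Neg.neg : E d → E d) = targetMeasure f := by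
  set ρ : E d → ℝ≥0∞ := fun x => ENNReal.ofReal (Real.exp (-f x)) with hρ
  have hρeven : ∀ x : E d, ρ (-x) = ρ x := by
    intro x; simp only [hρ]; rw [← hsymm]
  have emb : MeasurableEmbedding (Neg.neg : E d → E d) :=
    (MeasurableEquiv.neg (E d)).measurableEmbedding
  have hmap : (volume.withDensity ρ).map (Neg.neg : E d → E d) = volume.withDensity ρ := by
    ext s hs
    rw [Measure.map_apply measurable_neg hs, withDensity_apply _ (measurable_neg hs),
      withDensity_apply _ hs]
    have h1 : ∫⁻ y in s, ρ y ∂(volume : Measure (E d))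
        = ∫⁻ x in (Neg.neg : E d → E d) ⁻¹' s, ρ (-x) ∂volume := by
      conv_lhs => rw [← Measure.map_neg_eq_self (volume : Measure (E d))]
      rw [Measure.restrict_map measurable_neg hs, emb.lintegral_map]
    rw [h1]
    congr 1
    funext x
    exact (hρeven x).symm
  rw [targetMeasure, Measure.map_smul, hmap]

lemma mala_target_mean_zero {d : ℕ} [NeZero d] (f : E d → ℝ) (hsymm : ∀ x : E d, f x = f (-x)) :
    ∫ x, x 0 ∂(targetMeasure f) = 0 := by
  have h1 : ∫ x, x 0 ∂(targetMeasure f)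
      = ∫ x, (-x) 0 ∂(targetMeasure f) := by
    conv_lhs => rw [← mala_target_neg_invariant f hsymm,
      show (Neg.neg : E d → E d) = ⇑(MeasurableEquiv.neg (E d)) from rfl]
    rw [integral_map_equiv (MeasurableEquiv.neg (E d)) (fun y : E d => y 0)]
    rfl
  have h2 : ∀ x : E d, (-x) 0 = -(x 0) := fun _ => rfl
  simp only [h2] at h1
  rw [integral_neg] at h1
  linarith

lemma mala_kernel_moment_bound (d : ℕ) [NeZero d] (f : E d → ℝ) (h : ℝ) (hh : 0 < h) (x : E d) :
    ∫ y, (x 0 - y 0)^2 ∂(malaKernel f h x) ≤ h^2 * ((gradient f x) 0)^2 + 4*h := by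
  set A : ℝ := (gradient f x) 0 with hA
  have hbound_nonneg : (0:ℝ) ≤ h^2 * A^2 + 4*h := by positivity
  have hmeas : AEStronglyMeasurable (fun y : E d => (x 0 - y 0)^2) (malaKernel f h x) := by
    apply Continuous.aestronglyMeasurable
    fun_prop
  rw [integral_eq_lintegral_of_nonneg_ae (ae_of_all _ fun y => sq_nonneg _) hmeas]
  apply ENNReal.toReal_le_of_le_ofReal hbound_nonneg
  rw [malaKernel, lintegral_add_measure]
  have hψ : Measurable fun y : E d => ENNReal.ofReal ((x 0 - y 0)^2) :=
    Measurable.ennreal_ofReal (by fun_prop)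
  have hdirac : ∫⁻ y, ENNReal.ofReal ((x 0 - y 0)^2)
      ∂((((stdGaussian d).withDensity fun g =>
        ENNReal.ofReal (1 - malaAccept f h x (malaPropose f h x g))) Set.univ) • Measure.dirac x) = 0 := by
    rw [lintegral_smul_measure, lintegral_dirac' _ hψ]
    simp
  rw [hdirac, add_zero]
  have hP : Measurable (malaPropose f h x) := by
    have : malaPropose f h x = fun g : E d => (x - h • gradient f x) + Real.sqrt (2*h) • g := by
      funext g; rw [malaPropose]
    rw [this]
    exact ((measurable_id (α := E d)).const_smul (Real.sqrt (2*h))).const_add (x - h • gradient f x)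
  rw [lintegral_map hψ hP]
  have hle : ((stdGaussian d).withDensity fun g =>
      ENNReal.ofReal (malaAccept f h x (malaPropose f h x g))) ≤ stdGaussian d := by
    rw [Measure.le_iff]
    intro s hs
    rw [withDensity_apply _ hs]
    calc ∫⁻ g in s, ENNReal.ofReal (malaAccept f h x (malaPropose f h x g)) ∂(stdGaussian d)
        ≤ ∫⁻ _ in s, (1:ℝ≥0∞) ∂(stdGaussian d) := by
          apply lintegral_mono
          intro g
          exact ENNReal.ofReal_le_one.mpr (min_le_left _ _)
      _ = (stdGaussian d) s := by simp
  set a : ℝ := h * A with ha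
  set b : ℝ := -Real.sqrt (2*h) with hb
  have hcoordP : ∀ g : E d, x 0 - (malaPropose f h x g) 0 = a + b * g 0 := by
    intro g
    have : (malaPropose f h x g) 0 = x 0 - h * A + Real.sqrt (2*h) * g 0 := by
      rw [malaPropose]
      simp [PiLp.add_apply, PiLp.sub_apply, PiLp.smul_apply, hA, smul_eq_mul]
    rw [this, ha, hb]; ring
  have hφm : Measurable fun t : ℝ => ENNReal.ofReal ((a + b * t)^2) :=
    Measurable.ennreal_ofReal (by fun_prop)
  calc ∫⁻ g, ENNReal.ofReal ((x 0 - (malaPropose f h x g) 0)^2)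
        ∂((stdGaussian d).withDensity fun g =>
          ENNReal.ofReal (malaAccept f h x (malaPropose f h x g)))
      ≤ ∫⁻ g, ENNReal.ofReal ((x 0 - (malaPropose f h x g) 0)^2) ∂(stdGaussian d) :=
        lintegral_mono' hle le_rfl
    _ = ∫⁻ g, (fun t : ℝ => ENNReal.ofReal ((a + b * t)^2)) (g 0) ∂(stdGaussian d) := by
        congr 1; funext g; rw [hcoordP g]
    _ = ∫⁻ t, ENNReal.ofReal ((a + b * t)^2) ∂(gaussianReal 0 1) :=
        mala_lintegral_stdGaussian_coord d _ hφm
    _ ≤ ENNReal.ofReal (a^2 + 2*b^2) := mala_gauss_quad a b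
    _ = ENNReal.ofReal (h^2 * A^2 + 4*h) := by
        congr 1
        rw [ha, hb]
        have : Real.sqrt (2*h) ^ 2 = 2*h := Real.sq_sqrt (by linarith)
        nlinarith [this]

end MalaAux

theorem mala_spectral_gap_separable
    (d : ℕ) [NeZero d] (fi : Fin d → ℝ → ℝ) (L m h : ℝ) (hL : 0 ≤ L) (hm : 0 < m)
    (hh : 0 < h)
    -- the separable target `f(x) = ∑ᵢ fᵢ(xᵢ)`
    (f : E d → ℝ) (hf : ∀ x : E d, f x = ∑ i, fi i (x i))
    -- symmetry: `f(x) = f(-x)`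
    (hsymm : ∀ x : E d, f x = f (-x))
    -- `f₁` is `L`-smooth: it is `C²` with `|f₁''| ≤ L` everywhere
    (hf1 : ContDiff ℝ 2 (fi 0)) (hf1'' : ∀ c : ℝ, |deriv (deriv (fi 0)) c| ≤ L)
    -- `π*` is a genuine probability distribution
    (hprob : IsProbabilityMeasure (targetMeasure f))
    -- `m ≤ E_{π*}[x₁²]`
    (hmoment : m ≤ ∫ x, (x 0) ^ 2 ∂(targetMeasure f)) :
    spectralGap (targetMeasure f) (malaKernel f h) ≤
      (L ^ 2 * h ^ 2 * (∫ x, (x 0) ^ 2 ∂(targetMeasure f)) + 2 * h) / m := by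
  classical
  haveI := hprob
  set mu := targetMeasure f with hmu
  set Eint : ℝ := ∫ x, (x 0) ^ 2 ∂mu with hEint
  have hEm : m ≤ Eint := hmoment
  have hEpos : 0 < Eint := lt_of_lt_of_le hm hEm
  -- integrability of the second moment
  have h_sq_int : Integrable (fun x : E d => (x 0) ^ 2) mu := by
    by_contra hni
    rw [hEint, integral_undef hni] at hEpos
    exact lt_irrefl 0 hEpos
  -- mean zero
  have hmean : ∫ x, x 0 ∂mu = 0 := mala_target_mean_zero f hsymm
  -- the test function
  set g0 : E d → ℝ := fun x => x 0 with hg0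
  have hvar : var mu g0 = Eint := by
    rw [var, hEint]
    congr 1
    funext x
    rw [hg0]
    simp only []
    rw [hmean, sub_zero]
  have hvarpos : 0 < var mu g0 := by rw [hvar]; exact hEpos
  -- the Dirichlet form bound
  have hgradsq : ∀ x : E d, ((gradient f x) 0)^2 ≤ L^2 * (x 0)^2 := by
    intro x
    rcases mala_grad_coord d fi f hf hf1 x with hz | he
    · rw [hz]
      simpa using mul_nonneg (sq_nonneg L) (sq_nonneg (x 0))
    · rw [he]
      have heven : ∀ t : ℝ, fi 0 t = fi 0 (-t) := by
        intro t
        have hx1 : ∀ s : ℝ, f (EuclideanSpace.single (0 : Fin d) s)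
            = fi 0 s + ∑ i ∈ Finset.univ.erase 0, fi i 0 := by
          intro s
          rw [hf, ← Finset.add_sum_erase _ _ (Finset.mem_univ (0 : Fin d))]
          have e0 : (EuclideanSpace.single (0 : Fin d) s) 0 = s := by simp
          rw [e0]
          congr 1
          apply Finset.sum_congr rfl
          intro i hi
          congr 1
          simp [EuclideanSpace.single_apply, Finset.ne_of_mem_erase hi]
        have hnegs : -(EuclideanSpace.single (0 : Fin d) t) = EuclideanSpace.single (0 : Fin d) (-t) := by
          ext i
          simp [EuclideanSpace.single_apply]
          by_cases hi : i = 0 <;> simp [hi]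
        have := hsymm (EuclideanSpace.single (0 : Fin d) t)
        rw [hnegs, hx1, hx1] at this
        linarith
      have hd := mala_deriv_bound (fi 0) L hf1 hf1'' heven (x 0)
      calc (deriv (fi 0) (x 0))^2 = |deriv (fi 0) (x 0)|^2 := (sq_abs _).symm
        _ ≤ (L * |x 0|)^2 := by
            apply sq_le_sq'
            · linarith [abs_nonneg (deriv (fi 0) (x 0))]
            · exact hd
        _ = L^2 * (x 0)^2 := by rw [mul_pow, sq_abs]
  have hF_bound : ∀ x : E d, ∫ y, (g0 x - g0 y)^2 ∂(malaKernel f h x)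
      ≤ L^2 * h^2 * (x 0)^2 + 4*h := by
    intro x
    calc ∫ y, (g0 x - g0 y)^2 ∂(malaKernel f h x)
        = ∫ y, (x 0 - y 0)^2 ∂(malaKernel f h x) := rfl
      _ ≤ h^2 * ((gradient f x) 0)^2 + 4*h := mala_kernel_moment_bound d f h hh x
      _ ≤ h^2 * (L^2 * (x 0)^2) + 4*h := by
          have := hgradsq x
          nlinarith [sq_nonneg h]
      _ = L^2 * h^2 * (x 0)^2 + 4*h := by ring
  have hG_int : Integrable (fun x : E d => L^2 * h^2 * (x 0)^2 + 4*h) mu :=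
    (h_sq_int.const_mul (L^2 * h^2)).add (integrable_const _)
  have hG_val : ∫ x, (L^2 * h^2 * (x 0)^2 + 4*h) ∂mu = L^2 * h^2 * Eint + 4*h := by
    rw [integral_add (h_sq_int.const_mul (L^2 * h^2)) (integrable_const _),
      integral_const_mul, integral_const]
    simp [hEint]
  have hdir : dirichletForm mu (malaKernel f h) g0 ≤ (1/2) * (L^2 * h^2 * Eint + 4*h) := by
    rw [dirichletForm]
    have hmono : ∫ x, ∫ y, (g0 x - g0 y)^2 ∂(malaKernel f h x) ∂mu
        ≤ ∫ x, (L^2 * h^2 * (x 0)^2 + 4*h) ∂mu := by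
      apply integral_mono_of_nonneg
      · exact ae_of_all _ fun x => integral_nonneg fun y => sq_nonneg _
      · exact hG_int
      · exact ae_of_all _ fun x => hF_bound x
    rw [hG_val] at hmono
    have : (0:ℝ) < 1/2 := by norm_num
    nlinarith [hmono]
  -- spectral gap is an infimum
  have hmem : dirichletForm mu (malaKernel f h) g0 / var mu g0
      ∈ {r | ∃ g : E d → ℝ, 0 < var mu g ∧ r = dirichletForm mu (malaKernel f h) g / var mu g} :=
    ⟨g0, hvarpos, rfl⟩
  have hbdd : BddBelow {r | ∃ g : E d → ℝ, 0 < var mu g ∧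
      r = dirichletForm mu (malaKernel f h) g / var mu g} := by
    refine ⟨0, ?_⟩
    rintro r ⟨g, hv, rfl⟩
    apply div_nonneg _ hv.le
    rw [dirichletForm]
    apply mul_nonneg (by norm_num)
    exact integral_nonneg fun x => integral_nonneg fun y => sq_nonneg _
  have hgap := csInf_le hbdd hmem
  rw [spectralGap]
  refine le_trans hgap ?_
  rw [hvar]
  have hnum_nonneg : (0:ℝ) ≤ L^2 * h^2 * Eint + 2*h := by positivity
  calc dirichletForm mu (malaKernel f h) g0 / Eint
      ≤ ((1/2) * (L^2 * h^2 * Eint + 4*h)) / Eint := by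
        gcongr
    _ ≤ (L^2 * h^2 * Eint + 2*h) / m := by
        apply div_le_div₀ hnum_nonneg _ hm hEm
        nlinarith [sq_nonneg L, sq_nonneg h, hEpos.le, mul_nonneg (mul_nonneg (sq_nonneg L) (sq_nonneg h)) hEpos.le]
end
end

section
/- Let A be the diagonal matrix in ℝ^{d×d} with A₁₁ = 1 and A_{ii} = κ for 2 ≤ i ≤ d, let f(x) = (1/2)xᵀAx, and fix x ∈ ℝ^d, h > 0 and parameters α₁, α_{−1}, β₁, β_{−1} ∈ ℝ. Let y be the random point with y₁ = (1−α₁)x₁ + β₁g₁ and y_{−1} = (1−α_{−1})x_{−1} + β_{−1}g_{−1} where g ∼ N(0, I_d). Then E_g[f(x) − f(y) + (1/(4h))(‖y − (x − h∇f(x))‖² − ‖x − (y − h∇f(y))‖²)] = (h/4)((2α₁−α₁²)x₁² − β₁²) + (hκ²/4)((2α_{−1}−α_{−1}²)‖x_{−1}‖² − β_{−1}²(d−1)). -/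
open Matrix Finset MeasureTheory

noncomputable section

/-- Squared Euclidean norm on `ℝ^d`. -/
def sqNorm {d : ℕ} (z : Fin d → ℝ) : ℝ := ∑ i, z i ^ 2

/-- The standard Gaussian `N(0, I_d)` on `Fin d → ℝ`. -/
def stdGaussianPi (d : ℕ) : Measure (Fin d → ℝ) :=
  Measure.pi fun _ : Fin d => ProbabilityTheory.gaussianReal 0 1

/-- The diagonal matrix `A` with `A₁₁ = 1` and `Aᵢᵢ = κ` for the other coordinates. -/
def hardDiag (d : ℕ) [NeZero d] (κ : ℝ) : Matrix (Fin d) (Fin d) ℝ :=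
  Matrix.diagonal fun i => if i = 0 then 1 else κ

/-- The random proposal `y` with `y₁ = (1−α₁)x₁ + β₁g₁` and
`yᵢ = (1−α₋₁)xᵢ + β₋₁gᵢ` for `i ≠ 1`. -/
def proposalY {d : ℕ} [NeZero d] (α₁ αm β₁ βm : ℝ) (x g : Fin d → ℝ) : Fin d → ℝ :=
  fun i => if i = 0 then (1 - α₁) * x 0 + β₁ * g 0 else (1 - αm) * x i + βm * g i

namespace MalaAux

open Real ProbabilityTheory Set
open scoped ENNReal NNReal

lemma gaussianPDFReal_zero_one (t : ℝ) :
    gaussianPDFReal 0 1 t = (Real.sqrt (2 * π))⁻¹ * Real.exp (-(1/2) * t ^ 2) := by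
  rw [gaussianPDFReal]
  norm_num
  left
  ring

lemma integrable_id_mul_pdf01 :
    Integrable (fun t : ℝ => t * gaussianPDFReal 0 1 t) := by
  have h := (integrable_mul_exp_neg_mul_sq (b := 1/2) (by norm_num)).const_mul
    ((Real.sqrt (2 * π))⁻¹)
  have e : (fun t : ℝ => t * gaussianPDFReal 0 1 t)
      = fun t => (Real.sqrt (2 * π))⁻¹ * (t * Real.exp (-(1/2) * t ^ 2)) := by
    funext t; rw [gaussianPDFReal_zero_one]; ring
  rw [e]; exact h

lemma integrable_sq_mul_pdf01 :
    Integrable (fun t : ℝ => t ^ 2 * gaussianPDFReal 0 1 t) := by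
  have h := (integrable_rpow_mul_exp_neg_mul_sq (b := 1/2) (by norm_num)
    (s := 2) (by norm_num)).const_mul ((Real.sqrt (2 * π))⁻¹)
  have e : (fun t : ℝ => t ^ 2 * gaussianPDFReal 0 1 t)
      = fun t => (Real.sqrt (2 * π))⁻¹ * (t ^ (2:ℝ) * Real.exp (-(1/2) * t ^ 2)) := by
    funext t
    rw [gaussianPDFReal_zero_one, show (2:ℝ) = ((2:ℕ):ℝ) by norm_num, Real.rpow_natCast]
    ring
  rw [e]; exact h

lemma moment1_pdf01 : ∫ t : ℝ, t * gaussianPDFReal 0 1 t = 0 := by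
  set f := fun t : ℝ => t * gaussianPDFReal 0 1 t with hf
  have h1 : ∫ t : ℝ, f (-t) = ∫ t : ℝ, f t := integral_neg_eq_self f volume
  have h2 : (fun t : ℝ => f (-t)) = fun t => -f t := by
    funext t
    simp only [hf, gaussianPDFReal_zero_one, neg_neg, neg_mul, neg_sq]
  rw [h2, integral_neg] at h1
  linarith

lemma moment2_pdf01 : ∫ t : ℝ, t ^ 2 * gaussianPDFReal 0 1 t = 1 := by
  have e : (fun t : ℝ => t ^ 2 * gaussianPDFReal 0 1 t)
      = fun t => (Real.sqrt (2 * π))⁻¹ * (t ^ 2 * Real.exp (-(1/2) * t ^ 2)) := by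
    funext t; rw [gaussianPDFReal_zero_one]; ring
  rw [e, integral_const_mul]
  have h2 : ∫ t : ℝ, t ^ 2 * Real.exp (-(1/2) * t ^ 2)
      = 2 * ∫ t in Ioi (0:ℝ), t ^ 2 * Real.exp (-(1/2) * t ^ 2) := by
    rw [← integral_comp_abs (f := fun t : ℝ => t ^ 2 * Real.exp (-(1/2) * t ^ 2))]
    simp_rw [sq_abs]
  have h3 : ∫ t in Ioi (0:ℝ), t ^ 2 * Real.exp (-(1/2) * t ^ 2)
      = ((1:ℝ)/2) ^ (-((2:ℝ) + 1) / 2) * (1 / 2) * Real.Gamma (((2:ℝ) + 1) / 2) := by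
    rw [← integral_rpow_mul_exp_neg_mul_rpow (by norm_num) (by norm_num : (-1:ℝ) < 2)
      (by norm_num : (0:ℝ) < 1/2)]
    refine setIntegral_congr_fun measurableSet_Ioi (fun t ht => ?_)
    rw [show (2:ℝ) = ((2:ℕ):ℝ) by norm_num, Real.rpow_natCast]
  have hgamma : Real.Gamma (((2:ℝ) + 1) / 2) = Real.sqrt π / 2 := by
    have : ((2:ℝ) + 1) / 2 = 1/2 + 1 := by norm_num
    rw [this, Real.Gamma_add_one (by norm_num), Real.Gamma_one_half_eq]
    ring
  have hrpow : ((1:ℝ)/2) ^ (-((2:ℝ) + 1) / 2) = 2 * Real.sqrt 2 := by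
    rw [one_div, Real.inv_rpow (by norm_num : (0:ℝ) ≤ 2),
      ← Real.rpow_neg (by norm_num : (0:ℝ) ≤ 2)]
    rw [show -(-((2:ℝ) + 1) / 2) = 1 + 1/2 by norm_num, Real.rpow_add (by norm_num : (0:ℝ) < 2),
      Real.rpow_one, ← Real.sqrt_eq_rpow]
  rw [h2, h3, hgamma, hrpow]
  rw [show Real.sqrt (2 * π) = Real.sqrt 2 * Real.sqrt π from Real.sqrt_mul (by norm_num) π]
  have h2pos : (0:ℝ) < Real.sqrt 2 := Real.sqrt_pos.mpr (by norm_num)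
  have hppos : (0:ℝ) < Real.sqrt π := Real.sqrt_pos.mpr Real.pi_pos
  have hsq : Real.sqrt 2 * Real.sqrt 2 = 2 := Real.mul_self_sqrt (by norm_num)
  field_simp

lemma integral_gaussianReal01 (φ : ℝ → ℝ) :
    ∫ t, φ t ∂(gaussianReal 0 1) = ∫ t, φ t * gaussianPDFReal 0 1 t := by
  rw [gaussianReal_of_var_ne_zero _ one_ne_zero]
  have hd : gaussianPDF 0 1 = fun t => ((gaussianPDFReal 0 1 t).toNNReal : ℝ≥0∞) := rfl
  rw [hd, integral_withDensity_eq_integral_smul (measurable_gaussianPDFReal 0 1).real_toNNReal]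
  congr 1
  funext t
  rw [NNReal.smul_def, smul_eq_mul, Real.coe_toNNReal _ (gaussianPDFReal_nonneg 0 1 t), mul_comm]

lemma integrable_gaussianReal01 (φ : ℝ → ℝ)
    (h2 : Integrable (fun t => φ t * gaussianPDFReal 0 1 t)) :
    Integrable φ (gaussianReal 0 1) := by
  rw [gaussianReal_of_var_ne_zero _ one_ne_zero]
  have hd : gaussianPDF 0 1 = fun t => ((gaussianPDFReal 0 1 t).toNNReal : ℝ≥0∞) := rfl
  rw [hd, integrable_withDensity_iff_integrable_smul
    (measurable_gaussianPDFReal 0 1).real_toNNReal]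
  have e : (fun t => ((gaussianPDFReal 0 1 t).toNNReal : ℝ≥0) • φ t)
      = fun t => φ t * gaussianPDFReal 0 1 t := by
    funext t
    rw [NNReal.smul_def, smul_eq_mul, Real.coe_toNNReal _ (gaussianPDFReal_nonneg 0 1 t),
      mul_comm]
  rw [e]
  exact h2

lemma integrable_id_gauss : Integrable (fun t : ℝ => t) (gaussianReal 0 1) :=
  integrable_gaussianReal01 _ integrable_id_mul_pdf01

lemma integrable_sq_gauss : Integrable (fun t : ℝ => t ^ 2) (gaussianReal 0 1) :=
  integrable_gaussianReal01 _ integrable_sq_mul_pdf01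

lemma integral_id_gauss : ∫ t : ℝ, t ∂(gaussianReal 0 1) = 0 := by
  rw [integral_gaussianReal01]; exact moment1_pdf01

lemma integral_sq_gauss : ∫ t : ℝ, t ^ 2 ∂(gaussianReal 0 1) = 1 := by
  rw [integral_gaussianReal01]; exact moment2_pdf01

lemma stdGaussianPi_map_eval (d : ℕ) (i : Fin d) :
    (stdGaussianPi d).map (fun g => g i) = gaussianReal 0 1 := by
  refine Measure.ext fun s hs => ?_
  rw [stdGaussianPi, Measure.map_apply (measurable_pi_apply i) hs]
  have hp : (fun g : Fin d → ℝ => g i) ⁻¹' s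
      = Set.pi Set.univ (Function.update (fun _ => Set.univ) i s) := Set.eval_preimage
  rw [hp, Measure.pi_pi]
  rw [Finset.prod_eq_single i (fun j _ hj => by simp [Function.update_of_ne hj])
    (fun hi => absurd (Finset.mem_univ i) hi)]
  simp

lemma integrable_quad (d : ℕ) (i : Fin d) (c2 c1 c0 : ℝ) :
    Integrable (fun g : Fin d → ℝ => c2 * (g i) ^ 2 + c1 * g i + c0) (stdGaussianPi d) := by
  have hφ : Integrable (fun t : ℝ => c2 * t ^ 2 + c1 * t + c0) (gaussianReal 0 1) :=
    (((integrable_sq_gauss.const_mul c2).add (integrable_id_gauss.const_mul c1)).add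
      (integrable_const c0))
  have hm : AEStronglyMeasurable (fun t : ℝ => c2 * t ^ 2 + c1 * t + c0)
      ((stdGaussianPi d).map (fun g => g i)) := by
    apply Measurable.aestronglyMeasurable
    fun_prop
  rw [← stdGaussianPi_map_eval d i] at hφ
  exact (integrable_map_measure hm (measurable_pi_apply i).aemeasurable).mp hφ

lemma integral_quad (d : ℕ) (i : Fin d) (c2 c1 c0 : ℝ) :
    ∫ g : Fin d → ℝ, (c2 * (g i) ^ 2 + c1 * g i + c0) ∂(stdGaussianPi d) = c2 + c0 := by
  have : IsProbabilityMeasure (gaussianReal (0:ℝ) (1:ℝ≥0)) := inferInstance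
  have hm : AEStronglyMeasurable (fun t : ℝ => c2 * t ^ 2 + c1 * t + c0)
      ((stdGaussianPi d).map (fun g => g i)) := by
    apply Measurable.aestronglyMeasurable
    fun_prop
  have E : ∫ g : Fin d → ℝ, (c2 * (g i) ^ 2 + c1 * g i + c0) ∂(stdGaussianPi d)
      = ∫ t, (c2 * t ^ 2 + c1 * t + c0) ∂(gaussianReal 0 1) := by
    rw [← stdGaussianPi_map_eval d i]
    exact (integral_map (μ := stdGaussianPi d) (φ := fun g : Fin d → ℝ => g i)
      (measurable_pi_apply i).aemeasurable hm).symm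
  have hfg : Integrable (fun t : ℝ => c2 * t ^ 2 + c1 * t) (gaussianReal 0 1) := by
    have := (integrable_sq_gauss.const_mul c2).add (integrable_id_gauss.const_mul c1)
    exact this
  rw [E]
  rw [integral_add hfg (integrable_const c0),
    integral_add (integrable_sq_gauss.const_mul c2) (integrable_id_gauss.const_mul c1),
    integral_const_mul, integral_const_mul, integral_id_gauss, integral_sq_gauss, integral_const]
  simp

end MalaAux
theorem mala_gaussian_accept_expectation (d : ℕ) [NeZero d] (h κ α₁ αm β₁ βm : ℝ)
    (hh : 0 < h) (x : Fin d → ℝ) :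
    (∫ g : Fin d → ℝ,
        ((1 / 2) * (x ⬝ᵥ hardDiag d κ *ᵥ x) -
          (1 / 2) * (proposalY α₁ αm β₁ βm x g ⬝ᵥ hardDiag d κ *ᵥ proposalY α₁ αm β₁ βm x g) +
          (1 / (4 * h)) *
            (sqNorm (proposalY α₁ αm β₁ βm x g - (x - h • (hardDiag d κ *ᵥ x))) -
              sqNorm (x - (proposalY α₁ αm β₁ βm x g -
                h • (hardDiag d κ *ᵥ proposalY α₁ αm β₁ βm x g)))))
        ∂(stdGaussianPi d)) =
      (h / 4) * ((2 * α₁ - α₁ ^ 2) * (x 0) ^ 2 - β₁ ^ 2) +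
        (h * κ ^ 2 / 4) *
          ((2 * αm - αm ^ 2) * (∑ i ∈ univ.erase 0, (x i) ^ 2) - βm ^ 2 * ((d : ℝ) - 1)) := by
  classical
  have hhne : h ≠ 0 := ne_of_gt hh
  have key : ∀ g : Fin d → ℝ,
      ((1 / 2) * (x ⬝ᵥ hardDiag d κ *ᵥ x) -
          (1 / 2) * (proposalY α₁ αm β₁ βm x g ⬝ᵥ hardDiag d κ *ᵥ proposalY α₁ αm β₁ βm x g) +
          (1 / (4 * h)) *
            (sqNorm (proposalY α₁ αm β₁ βm x g - (x - h • (hardDiag d κ *ᵥ x))) -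
              sqNorm (x - (proposalY α₁ αm β₁ βm x g -
                h • (hardDiag d κ *ᵥ proposalY α₁ αm β₁ βm x g)))))
      = ∑ i : Fin d,
          ((-(h * (if i = 0 then (1:ℝ) else κ) ^ 2 / 4 * (if i = 0 then β₁ else βm) ^ 2))
              * (g i) ^ 2
            + (-(h * (if i = 0 then (1:ℝ) else κ) ^ 2 / 4 *
                (2 * (1 - (if i = 0 then α₁ else αm)) * x i * (if i = 0 then β₁ else βm))))
              * g i
            + (h * (if i = 0 then (1:ℝ) else κ) ^ 2 / 4 *
                ((x i) ^ 2 - ((1 - (if i = 0 then α₁ else αm)) * x i) ^ 2))) := by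
    intro g
    simp only [hardDiag, proposalY, sqNorm, dotProduct, Matrix.mulVec_diagonal,
      Pi.sub_apply, Pi.smul_apply, smul_eq_mul]
    simp only [Finset.mul_sum]
    rw [← Finset.sum_sub_distrib, ← Finset.sum_sub_distrib]
    simp only [Finset.mul_sum]
    rw [← Finset.sum_add_distrib]
    refine Finset.sum_congr rfl fun i _ => ?_
    by_cases hi : i = 0
    · subst hi
      simp only [if_pos rfl, eq_self_iff_true, if_true]
      field_simp
      ring
    · simp only [if_neg hi]
      field_simp
      ring
  rw [integral_congr_ae (Filter.Eventually.of_forall key)]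
  rw [integral_finset_sum univ (fun i _ => MalaAux.integrable_quad d i _ _ _)]
  rw [Finset.sum_congr rfl (fun i (_ : i ∈ univ) => MalaAux.integral_quad d i _ _ _)]
  rw [← Finset.add_sum_erase _ _ (Finset.mem_univ 0)]
  have h0 : (-(h * (if (0:Fin d) = 0 then (1:ℝ) else κ) ^ 2 / 4 *
        (if (0:Fin d) = 0 then β₁ else βm) ^ 2))
      + (h * (if (0:Fin d) = 0 then (1:ℝ) else κ) ^ 2 / 4 *
        ((x 0) ^ 2 - ((1 - (if (0:Fin d) = 0 then α₁ else αm)) * x 0) ^ 2))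
      = (h / 4) * ((2 * α₁ - α₁ ^ 2) * (x 0) ^ 2 - β₁ ^ 2) := by
    norm_num
    ring
  have hrest : ∑ i ∈ univ.erase (0 : Fin d),
      ((-(h * (if i = 0 then (1:ℝ) else κ) ^ 2 / 4 * (if i = 0 then β₁ else βm) ^ 2))
        + (h * (if i = 0 then (1:ℝ) else κ) ^ 2 / 4 *
            ((x i) ^ 2 - ((1 - (if i = 0 then α₁ else αm)) * x i) ^ 2)))
      = (h * κ ^ 2 / 4) *
          ((2 * αm - αm ^ 2) * (∑ i ∈ univ.erase 0, (x i) ^ 2) - βm ^ 2 * ((d : ℝ) - 1)) := by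
    rw [Finset.sum_congr rfl (fun i hi => by
      simp only [if_neg (Finset.ne_of_mem_erase hi)]
      ring :
      ∀ i ∈ univ.erase (0 : Fin d),
        ((-(h * (if i = 0 then (1:ℝ) else κ) ^ 2 / 4 * (if i = 0 then β₁ else βm) ^ 2))
          + (h * (if i = 0 then (1:ℝ) else κ) ^ 2 / 4 *
              ((x i) ^ 2 - ((1 - (if i = 0 then α₁ else αm)) * x i) ^ 2)))
        = (h * κ ^ 2 / 4) * ((2 * αm - αm ^ 2) * (x i) ^ 2 - βm ^ 2))]
    rw [← Finset.mul_sum]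
    congr 1
    rw [Finset.sum_sub_distrib, ← Finset.mul_sum, Finset.sum_const,
      Finset.card_erase_of_mem (Finset.mem_univ 0), Finset.card_univ, Fintype.card_fin,
      nsmul_eq_mul]
    have hd1 : ((d - 1 : ℕ) : ℝ) = (d : ℝ) - 1 := by
      have h1d : 1 ≤ d := Nat.one_le_iff_ne_zero.mpr (NeZero.ne d)
      push_cast [h1d]
      ring
    rw [hd1]
    ring
  rw [h0, hrest]
end
end

section
/- For every constant C₁ ≥ 1 there exist constants c₀ > 0, C₀ > 0 and d₀ such that the following holds for all d ≥ d₀ and κ ≥ 10. Let A be the diagonal matrix in ℝ^{d×d} with A₁₁ = 1 and A_{ii} = κ for 2 ≤ i ≤ d, let x ∈ ℝ^d satisfy ‖x_{−1}‖ ≤ √(2d/(3κ)) and |x₁| ≤ 5√(log d), and let y be the random point with y₁ = (1−α₁)x₁ + β₁g₁ and y_{−1} = (1−α_{−1})x_{−1} + β_{−1}g_{−1} for g ∼ N(0, I_d). Suppose the parameters satisfy |α_{−1}| ≤ (3/5)β_{−1}²κ, β_{−1}² ≥ C₀·log d/(κd), |α₁| ≤ C₁|α_{−1}|, and β₁ ≤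 C₁β_{−1}. Then with probability at least 1 − d⁻⁵ over g ∼ N(0, I_d): (h/4)‖x‖²_{A²} − (h/4)‖y‖²_{A²} ≤ −c₀·h·κ²·β_{−1}²·d, where ‖z‖²_{A²} = zᵀA²z. -/
open Matrix Finset MeasureTheory

noncomputable section

/- ### Auxiliary material -/

section Aux

open Real ProbabilityTheory
open scoped ENNReal NNReal

set_option maxHeartbeats 1000000

instance stdGaussianPi.instIsProbabilityMeasure (d : ℕ) :
    IsProbabilityMeasure (stdGaussianPi d) := by
  unfold stdGaussianPi; infer_instance

/- #### Product integrals over the standard Gaussian product measure -/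

theorem aux_integral_pi_prod {n : ℕ} (μ : Measure ℝ) [SigmaFinite μ] (f : Fin n → ℝ → ℝ) :
    ∫ x : Fin n → ℝ, ∏ i, f i (x i) ∂Measure.pi (fun _ => μ) = ∏ i, ∫ u, f i u ∂μ := by
  induction n with
  | zero =>
      simp [Measure.pi_empty_univ, measureReal_def]
  | succ n n_ih =>
      calc
        _ = ∫ x : ℝ × (Fin n → ℝ),
            f 0 x.1 * ∏ i : Fin n, f (Fin.succ i) (x.2 i) ∂(μ.prod (Measure.pi fun _ => μ)) := by
          rw [← ((measurePreserving_piFinSuccAbove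
            (fun _ : Fin (n+1) => μ) 0).symm).integral_comp']
          simp_rw [MeasurableEquiv.piFinSuccAbove_symm_apply, Fin.insertNthEquiv,
            Fin.prod_univ_succ, Fin.insertNth_zero]
          simp only [Fin.zero_succAbove, cast_eq, Function.comp_def, Fin.cons_zero, Fin.cons_succ,
            Equiv.coe_fn_mk]
        _ = (∫ u, f 0 u ∂μ) * ∏ i : Fin n, ∫ u, f (Fin.succ i) u ∂μ := by
          rw [← n_ih, ← integral_prod_mul]
        _ = ∏ i, ∫ u, f i u ∂μ := by rw [Fin.prod_univ_succ]

theorem aux_integrable_pi_prod {n : ℕ} (μ : Measure ℝ) [SigmaFinite μ] (f : Fin n → ℝ → ℝ)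
    (hf : ∀ i, Integrable (f i) μ) :
    Integrable (fun x : Fin n → ℝ => ∏ i, f i (x i)) (Measure.pi (fun _ => μ)) := by
  induction n with
  | zero => simp [integrable_const_iff, Measure.pi_empty_univ, isFiniteMeasure_iff]
  | succ n n_ih =>
      have hmp := ((measurePreserving_piFinSuccAbove (fun _ : Fin (n+1) => μ) 0).symm)
      rw [← hmp.integrable_comp_emb (MeasurableEquiv.measurableEmbedding _)]
      simp_rw [MeasurableEquiv.piFinSuccAbove_symm_apply, Fin.insertNthEquiv,
        Fin.prod_univ_succ, Fin.insertNth_zero]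
      simp only [Fin.zero_succAbove, cast_eq, Function.comp_def, Fin.cons_zero, Fin.cons_succ,
        Equiv.coe_fn_mk]
      exact Integrable.mul_prod (hf 0) (n_ih _ (fun i => hf _))

/- #### Integrals against the one-dimensional standard Gaussian -/

lemma aux_gaussianReal_eq : gaussianReal 0 1 =
    volume.withDensity (fun x => ((gaussianPDFReal 0 1 x).toNNReal : ℝ≥0∞)) := by
  rw [gaussianReal_of_var_ne_zero 0 one_ne_zero]
  rfl

lemma aux_integral_gaussianReal01 (f : ℝ → ℝ) :
    ∫ u, f u ∂(gaussianReal 0 1) = ∫ u, gaussianPDFReal 0 1 u * f u := by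
  rw [aux_gaussianReal_eq, integral_withDensity_eq_integral_smul
    ((measurable_gaussianPDFReal 0 1).real_toNNReal) f]
  congr 1 with u
  simp [NNReal.smul_def, Real.coe_toNNReal _ (gaussianPDFReal_nonneg 0 1 u)]

lemma aux_integrable_gaussianReal01_iff (f : ℝ → ℝ) :
    Integrable f (gaussianReal 0 1) ↔
      Integrable (fun u => gaussianPDFReal 0 1 u * f u) volume := by
  rw [aux_gaussianReal_eq, integrable_withDensity_iff_integrable_smul
    ((measurable_gaussianPDFReal 0 1).real_toNNReal)]
  constructor <;> intro h <;> refine h.congr (ae_of_all _ fun u => ?_) <;>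
    simp [NNReal.smul_def, Real.coe_toNNReal _ (gaussianPDFReal_nonneg 0 1 u)]

lemma aux_pdf_mul_exp_lin (c u : ℝ) :
    gaussianPDFReal 0 1 u * rexp (c * u) = rexp (c^2/2) * gaussianPDFReal c 1 u := by
  simp only [gaussianPDFReal, NNReal.coe_one, mul_one, sub_zero]
  rw [mul_assoc, mul_comm (rexp (c^2/2)), mul_assoc, ← Real.exp_add, ← Real.exp_add]
  congr 1
  ring

lemma aux_integral_exp_lin (c : ℝ) :
    ∫ u, rexp (c * u) ∂(gaussianReal 0 1) = rexp (c^2/2) := by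
  rw [aux_integral_gaussianReal01]
  simp_rw [aux_pdf_mul_exp_lin]
  rw [MeasureTheory.integral_const_mul, integral_gaussianPDFReal_eq_one c one_ne_zero, mul_one]

lemma aux_integrable_exp_lin (c : ℝ) :
    Integrable (fun u => rexp (c * u)) (gaussianReal 0 1) := by
  rw [aux_integrable_gaussianReal01_iff]
  have : Integrable (fun u => rexp (c^2/2) * gaussianPDFReal c 1 u) volume :=
    (integrable_gaussianPDFReal c 1).const_mul _
  exact this.congr (ae_of_all _ fun u => (aux_pdf_mul_exp_lin c u).symm)

lemma aux_pdf_mul_exp_sq (u : ℝ) :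
    gaussianPDFReal 0 1 u * rexp (-u^2/10)
      = Real.sqrt (5/6) * gaussianPDFReal 0 (5/6 : ℝ≥0) u := by
  simp only [gaussianPDFReal, NNReal.coe_one, mul_one, sub_zero]
  have h6 : ((5/6 : ℝ≥0) : ℝ) = (5/6 : ℝ) := by norm_num
  rw [h6]
  have hexp : rexp (-u^2/2) * rexp (-u^2/10) = rexp (-u^2/(2*(5/6))) := by
    rw [← Real.exp_add]; congr 1; ring
  rw [mul_assoc, hexp]
  have hs : Real.sqrt (2*π*(5/6)) = Real.sqrt (2*π) * Real.sqrt (5/6) :=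
    Real.sqrt_mul (by positivity) _
  rw [hs]
  have h2π : Real.sqrt (2*π) ≠ 0 := by positivity
  have h56 : Real.sqrt ((5:ℝ)/6) ≠ 0 := by positivity
  field_simp

lemma aux_integral_exp_sq10 :
    ∫ u, rexp (-u^2/10) ∂(gaussianReal 0 1) = Real.sqrt (5/6) := by
  rw [aux_integral_gaussianReal01]
  simp_rw [aux_pdf_mul_exp_sq]
  rw [MeasureTheory.integral_const_mul,
    integral_gaussianPDFReal_eq_one 0 (by norm_num : (5/6:ℝ≥0) ≠ 0), mul_one]

lemma aux_integrable_exp_sq10 :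
    Integrable (fun u => rexp (-u^2/10)) (gaussianReal 0 1) := by
  refine (integrable_const (1:ℝ)).mono' ?_ (ae_of_all _ fun u => ?_)
  · exact ((measurable_id.pow_const 2).neg.div_const 10).exp.aestronglyMeasurable
  · rw [Real.norm_eq_abs, abs_of_pos (Real.exp_pos _), ← Real.exp_zero]
    apply Real.exp_le_exp.2
    nlinarith [sq_nonneg u]

/- #### A Chernoff bound for the product Gaussian measure -/

theorem aux_chernoff_pi {d : ℕ} (f : Fin d → ℝ → ℝ)
    (hint : ∀ i, Integrable (fun u => rexp (f i u)) (gaussianReal 0 1)) (t : ℝ) :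
    stdGaussianPi d {g : Fin d → ℝ | t ≤ ∑ i, f i (g i)} ≤
      ENNReal.ofReal (rexp (-t) * ∏ i, ∫ u, rexp (f i u) ∂(gaussianReal 0 1)) := by
  have hexp : ∀ g : Fin d → ℝ, rexp (1 * ∑ i, f i (g i)) = ∏ i, rexp (f i (g i)) := by
    intro g; rw [one_mul, Real.exp_sum]
  have hint2 : Integrable (fun g : Fin d → ℝ => rexp (1 * ∑ i, f i (g i))) (stdGaussianPi d) := by
    have := aux_integrable_pi_prod (gaussianReal 0 1) (fun i u => rexp (f i u)) hint
    exact this.congr (ae_of_all _ fun g => (hexp g).symm)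
  have h := @measure_ge_le_exp_mul_mgf (Fin d → ℝ) _ (fun g => ∑ i, f i (g i))
    (stdGaussianPi d) 1 _ t zero_le_one hint2
  have hmgf : mgf (fun g : Fin d → ℝ => ∑ i, f i (g i)) (stdGaussianPi d) 1
      = ∏ i, ∫ u, rexp (f i u) ∂(gaussianReal 0 1) := by
    unfold mgf
    rw [show (∫ g, rexp (1 * ∑ i, f i (g i)) ∂(stdGaussianPi d))
        = ∫ g : Fin d → ℝ, ∏ i, rexp (f i (g i)) ∂(Measure.pi fun _ => gaussianReal 0 1) from
      integral_congr_ae (ae_of_all _ fun g => hexp g)]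
    exact aux_integral_pi_prod (gaussianReal 0 1) (fun i u => rexp (f i u))
  rw [hmgf, neg_one_mul] at h
  have hne : stdGaussianPi d {g : Fin d → ℝ | t ≤ ∑ i, f i (g i)} ≠ ⊤ := measure_ne_top _ _
  rw [← ENNReal.ofReal_toReal hne]
  exact ENNReal.ofReal_le_ofReal h

theorem aux_log_six_fifth : (87:ℝ)/500 ≤ Real.log (6/5) := by
  have h2 : Real.log ((6:ℝ)/5) = 2 * Real.log (Real.sqrt (6/5)) := by
    rw [Real.log_sqrt (by norm_num : (0:ℝ) ≤ 6/5)]; ring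
  have h3 : Real.log ((Real.sqrt ((6:ℝ)/5))⁻¹) ≤ (Real.sqrt ((6:ℝ)/5))⁻¹ - 1 :=
    Real.log_le_sub_one_of_pos (by positivity)
  rw [Real.log_inv] at h3
  have h4 : (Real.sqrt ((6:ℝ)/5))⁻¹ = Real.sqrt (5/6) := by
    rw [← Real.sqrt_inv]; norm_num
  have h5 : Real.sqrt ((5:ℝ)/6) ≤ 913/1000 := by
    rw [show (913:ℝ)/1000 = Real.sqrt ((913/1000)^2) from (Real.sqrt_sq (by norm_num)).symm]
    exact Real.sqrt_le_sqrt (by norm_num)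
  rw [h4] at h3
  linarith

theorem aux_chisq_tail (d : ℕ) [NeZero d] :
    stdGaussianPi d {g : Fin d → ℝ | ∑ i ∈ univ.erase 0, (g i)^2 ≤ (17/20)*((d:ℝ)-1)} ≤
      ENNReal.ofReal (rexp (-(((d:ℝ)-1)/500))) := by
  set f : Fin d → ℝ → ℝ := fun i u => if i = 0 then 0 else -u^2/10 with hf
  have hsum : ∀ g : Fin d → ℝ, ∑ i, f i (g i) = -(1/10) * ∑ i ∈ univ.erase 0, (g i)^2 := by
    intro g
    rw [← Finset.sum_erase (univ : Finset (Fin d)) (by simp [hf] : f 0 (g 0) = 0)]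
    rw [Finset.mul_sum]
    refine Finset.sum_congr rfl fun i hi => ?_
    rw [hf]; simp only [(Finset.mem_erase.mp hi).1, if_neg, ite_false]
    ring
  have hset : {g : Fin d → ℝ | ∑ i ∈ univ.erase 0, (g i)^2 ≤ (17/20)*((d:ℝ)-1)}
      = {g : Fin d → ℝ | -(1/10) * ((17/20)*((d:ℝ)-1)) ≤ ∑ i, f i (g i)} := by
    ext g
    simp only [Set.mem_setOf_eq, hsum g]
    constructor <;> intro hh <;> linarith
  rw [hset]
  refine le_trans (aux_chernoff_pi f ?_ _) ?_
  · intro i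
    by_cases hi : i = 0
    · refine (integrable_const (1:ℝ)).congr (ae_of_all _ fun u => ?_)
      simp [hf, hi]
    · refine aux_integrable_exp_sq10.congr (ae_of_all _ fun u => ?_)
      simp [hf, hi]
  · apply ENNReal.ofReal_le_ofReal
    have hprod : ∏ i, ∫ u, rexp (f i u) ∂(gaussianReal 0 1)
        = Real.sqrt (5/6) ^ (d - 1) := by
      rw [← Finset.mul_prod_erase univ _ (mem_univ 0)]
      have h0 : ∫ u, rexp (f 0 u) ∂(gaussianReal 0 1) = 1 := by
        simp only [hf, if_pos rfl, Real.exp_zero]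
        simp
      rw [h0, one_mul]
      rw [Finset.prod_congr rfl (fun i hi => ?_), Finset.prod_const,
        Finset.card_erase_of_mem (mem_univ 0), Finset.card_univ, Fintype.card_fin]
      rw [show (fun u => rexp (f i u)) = fun u => rexp (-u^2/10) by
        funext u; simp [hf, (Finset.mem_erase.mp hi).1]]
      exact aux_integral_exp_sq10
    rw [hprod]
    have hd1 : (1:ℕ) ≤ d := Nat.one_le_iff_ne_zero.mpr (NeZero.ne d)
    have hcast : ((d:ℝ) - 1) = ((d - 1 : ℕ) : ℝ) := by
      rw [Nat.cast_sub hd1, Nat.cast_one]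
    set n : ℕ := d - 1
    have hs : Real.sqrt ((5:ℝ)/6) ^ n = rexp ((n:ℝ) * Real.log (Real.sqrt (5/6))) := by
      rw [Real.exp_nat_mul, Real.exp_log (by positivity)]
    rw [hcast, hs, ← Real.exp_add]
    apply Real.exp_le_exp.2
    have hlog : Real.log (Real.sqrt ((5:ℝ)/6)) = -(Real.log (6/5) / 2) := by
      rw [Real.log_sqrt (by norm_num), show ((5:ℝ)/6) = ((6:ℝ)/5)⁻¹ by norm_num, Real.log_inv]
      ring
    rw [hlog]
    have h65 := aux_log_six_fifth
    have hn0 : (0:ℝ) ≤ (n:ℝ) := Nat.cast_nonneg n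
    nlinarith

theorem aux_lin_tail (d : ℕ) [NeZero d] (x : Fin d → ℝ) (lam T : ℝ) (hlam : 0 < lam) :
    stdGaussianPi d {g : Fin d → ℝ | T ≤ ∑ i ∈ univ.erase 0, x i * g i} ≤
      ENNReal.ofReal (rexp (-(lam*T) + lam^2 * (∑ i ∈ univ.erase 0, (x i)^2)/2)) := by
  set f : Fin d → ℝ → ℝ := fun i u => if i = 0 then 0 else (lam * x i) * u with hf
  have hsum : ∀ g : Fin d → ℝ, ∑ i, f i (g i) = lam * ∑ i ∈ univ.erase 0, x i * g i := by
    intro g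
    rw [← Finset.sum_erase (univ : Finset (Fin d)) (by simp [hf] : f 0 (g 0) = 0),
      Finset.mul_sum]
    refine Finset.sum_congr rfl fun i hi => ?_
    rw [hf]; simp only [(Finset.mem_erase.mp hi).1, ite_false]
    ring
  have hset : {g : Fin d → ℝ | T ≤ ∑ i ∈ univ.erase 0, x i * g i}
      = {g : Fin d → ℝ | lam * T ≤ ∑ i, f i (g i)} := by
    ext g
    simp only [Set.mem_setOf_eq, hsum g]
    exact (mul_le_mul_iff_right₀ hlam).symm
  rw [hset]
  refine le_trans (aux_chernoff_pi f ?_ _) (le_of_eq ?_)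
  · intro i
    by_cases hi : i = 0
    · refine (integrable_const (1:ℝ)).congr (ae_of_all _ fun u => ?_)
      simp [hf, hi]
    · refine (aux_integrable_exp_lin (lam * x i)).congr (ae_of_all _ fun u => ?_)
      simp [hf, hi]
  · congr 1
    have hprod : ∏ i, ∫ u, rexp (f i u) ∂(gaussianReal 0 1)
        = rexp (lam^2 * (∑ i ∈ univ.erase 0, (x i)^2)/2) := by
      rw [← Finset.mul_prod_erase univ _ (mem_univ 0)]
      have h0 : ∫ u, rexp (f 0 u) ∂(gaussianReal 0 1) = 1 := by
        simp only [hf, if_pos rfl]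
        simp
      rw [h0, one_mul]
      rw [Finset.prod_congr rfl (fun i hi => show _ = rexp ((lam * x i)^2/2) from ?_)]
      · rw [← Real.exp_sum]
        congr 1
        rw [Finset.mul_sum, Finset.sum_div]
        exact Finset.sum_congr rfl fun i _ => by ring
      · rw [show (fun u => rexp (f i u)) = fun u => rexp ((lam * x i) * u) by
          funext u; simp [hf, (Finset.mem_erase.mp hi).1]]
        exact aux_integral_exp_lin (lam * x i)
    rw [hprod, ← Real.exp_add]

/- #### Elementary real estimates -/

lemma aux_le_of_sq_le_sq (u v : ℝ) (hu : 0 ≤ u) (hv : 0 ≤ v) (h : u^2 ≤ v^2) : u ≤ v := by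
  nlinarith [sq_nonneg (u - v), sq_nonneg (u + v)]

theorem aux_core_ineq (D k a b x0 y0 L X P G : ℝ)
    (hD : 100000000 ≤ D) (hk : 10 ≤ k)
    (hL0 : 0 < L) (hLD : 1000 * L ≤ D)
    (hX0 : 0 ≤ X) (hXb : 3 * (k * X) ≤ 2 * D)
    (hx0 : x0^2 ≤ 25 * L)
    (ha : |a| ≤ (3/5) * b^2 * k)
    (hb : 400000 * L ≤ b^2 * (k * D))
    (hG : (17/20) * (D - 1) ≤ G)
    (hPT : |P| ≤ Real.sqrt (12 * L * X)) :
    x0^2 - y0^2 + k^2 * (X - ((1-a)^2*X + 2*(1-a)*b*P + b^2*G))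
      ≤ -((1/50) * k^2 * b^2 * D) := by
  have hD0 : (0:ℝ) < D := by linarith
  have hk0 : (0:ℝ) < k := by linarith
  have hb2 : (0:ℝ) < b^2 := by
    rcases lt_or_ge 0 (b^2) with hpos|hneg
    · exact hpos
    · exfalso
      nlinarith [mul_nonneg (neg_nonneg.mpr hneg) (by positivity : (0:ℝ) ≤ k*D)]
  have h12L : (0:ℝ) ≤ 12 * L := by linarith
  have hP2 : P^2 ≤ 12*L*X := by
    calc P^2 = |P|^2 := (sq_abs P).symm
    _ ≤ (Real.sqrt (12*L*X))^2 := by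
        exact pow_le_pow_left₀ (abs_nonneg P) hPT 2
    _ = 12*L*X := Real.sq_sqrt (by positivity)
  have s1 : 2*a*X ≤ (4/5)*(b^2*D) := by
    nlinarith [mul_le_mul_of_nonneg_right (le_abs_self a) (by linarith : (0:ℝ) ≤ 2*X),
      mul_le_mul_of_nonneg_right ha (by linarith : (0:ℝ) ≤ 2*X),
      mul_le_mul_of_nonneg_left hXb hb2.le]
  have hkP2 : k * P^2 ≤ 8*L*D := by
    nlinarith [mul_le_mul_of_nonneg_left hP2 hk0.le,
      mul_le_mul_of_nonneg_left hXb (by linarith : (0:ℝ) ≤ 4*L)]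
  have hP2'' : 400000*P^2 ≤ 8*b^2*D^2 := by
    have h1 : k * (400000*P^2) ≤ k * (8*b^2*D^2) := by
      nlinarith [mul_le_mul_of_nonneg_left hb (by linarith : (0:ℝ) ≤ 8*D)]
    exact le_of_mul_le_mul_left h1 hk0
  have s2 : -(2*(b*P)) ≤ (1/100)*(b^2*D) := by
    have h1 : -(b*P) ≤ |b| * |P| := by
      rw [← abs_mul]; exact neg_le_abs _
    have h2 : |b| * |P| ≤ b^2*D/200 := by
      apply aux_le_of_sq_le_sq _ _ (by positivity) (by positivity)
      have : (|b| * |P|)^2 = b^2*P^2 := by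
        rw [mul_pow, sq_abs, sq_abs]
      rw [this]
      nlinarith [mul_le_mul_of_nonneg_left hP2'' (by positivity : (0:ℝ) ≤ b^2)]
    linarith
  have hsqrtmul : Real.sqrt (12*L*X) = Real.sqrt (12*L) * Real.sqrt X :=
    Real.sqrt_mul h12L X
  have s3 : 2*(a*(b*P)) ≤ a^2*X + 12*(b^2*L) := by
    have habs : a*(b*P) ≤ |a| * (|b| * |P|) := by
      calc a*(b*P) ≤ |a*(b*P)| := le_abs_self _
      _ = |a| * (|b| * |P|) := by rw [abs_mul, abs_mul]
    have h5 : |a| * (|b| * |P|) ≤ |a| * (|b| * (Real.sqrt (12*L) * Real.sqrt X)) := by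
      apply mul_le_mul_of_nonneg_left _ (abs_nonneg a)
      apply mul_le_mul_of_nonneg_left _ (abs_nonneg b)
      rw [← hsqrtmul]; exact hPT
    have h6 : 2*(|a| * Real.sqrt X)*(|b| * Real.sqrt (12*L)) ≤
        (|a| * Real.sqrt X)^2 + (|b| * Real.sqrt (12*L))^2 := two_mul_le_add_sq _ _
    have e1 : (|a| * Real.sqrt X)^2 = a^2*X := by
      rw [mul_pow, sq_abs, Real.sq_sqrt hX0]
    have e2 : (|b| * Real.sqrt (12*L))^2 = b^2*(12*L) := by
      rw [mul_pow, sq_abs, Real.sq_sqrt h12L]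
    have h7 : 2*(|a| * (|b| * (Real.sqrt (12*L) * Real.sqrt X)))
        = 2*(|a| * Real.sqrt X)*(|b| * Real.sqrt (12*L)) := by ring
    linarith [habs, h5, h6, e1, e2, h7]
  have s4 : (17/20)*b^2*(D-1) ≤ b^2*G := by
    nlinarith [mul_le_mul_of_nonneg_left hG hb2.le]
  have s5 : 12*(b^2*L) ≤ (12/1000)*(b^2*D) := by
    nlinarith [mul_le_mul_of_nonneg_left hLD hb2.le]
  have s6 : x0^2 ≤ (1/160000)*(k^2*(b^2*D)) := by
    have h1 : 10*k ≤ k^2 := by nlinarith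
    nlinarith [mul_le_mul_of_nonneg_left h1 (by positivity : (0:ℝ) ≤ b^2*D), hb, hx0]
  have hBr : X - ((1-a)^2*X + 2*(1-a)*b*P + b^2*G)
      ≤ -(28/1000)*(b^2*D) + (17/20)*b^2 := by
    nlinarith [s1, s2, s3, s4, s5]
  have hk2 : (0:ℝ) ≤ k^2 := sq_nonneg k
  have hmul := mul_le_mul_of_nonneg_left hBr hk2
  have hbig : (17/20)*(k^2*b^2) ≤ (1279/160000)*((k^2*b^2)*D) := by
    nlinarith [mul_le_mul_of_nonneg_left (show (17/20:ℝ) ≤ (1279/160000)*D by nlinarith)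
      (mul_nonneg hk2 hb2.le)]
  nlinarith [hmul, hbig, s6, sq_nonneg y0]

lemma aux_log_le_two_sqrt {D : ℝ} (hD : 1 ≤ D) : Real.log D ≤ 2 * Real.sqrt D := by
  have h0 : (0:ℝ) < D := by linarith
  have h1 : Real.log D = 2 * Real.log (Real.sqrt D) := by
    rw [Real.log_sqrt h0.le]; ring
  have h2 : Real.log (Real.sqrt D) ≤ Real.sqrt D - 1 :=
    Real.log_le_sub_one_of_pos (Real.sqrt_pos.mpr h0)
  linarith

lemma aux_tail_numeric {D : ℝ} (hD : 100000000 ≤ D) :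
    rexp (-((D-1)/500)) + 2*(D^6)⁻¹ ≤ (D^5)⁻¹ := by
  have hD0 : (0:ℝ) < D := by linarith
  have hr : (10000:ℝ) ≤ Real.sqrt D := by
    rw [show (10000:ℝ) = Real.sqrt (10000^2) from (Real.sqrt_sq (by norm_num)).symm]
    exact Real.sqrt_le_sqrt (by norm_num; linarith)
  have hsq : Real.sqrt D ^ 2 = D := Real.sq_sqrt hD0.le
  have hlog : Real.log D ≤ 2 * Real.sqrt D := aux_log_le_two_sqrt (by linarith)
  have hlog2 : Real.log 2 ≤ 1 := by
    have := Real.log_le_sub_one_of_pos (by norm_num : (0:ℝ) < 2); linarith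
  have hA : rexp (-((D-1)/500)) ≤ (2*D^5)⁻¹ := by
    rw [show (2*D^5)⁻¹ = rexp (Real.log ((2*D^5)⁻¹)) from
      (Real.exp_log (by positivity)).symm]
    apply Real.exp_le_exp.2
    rw [Real.log_inv, Real.log_mul (by norm_num) (by positivity), Real.log_pow]
    have h5 : (5:ℝ) * Real.log D ≤ 10 * Real.sqrt D := by linarith
    have hbig : 10 * Real.sqrt D + 1 ≤ (D-1)/500 := by nlinarith
    push_cast
    nlinarith
  have hB : 2*(D^6)⁻¹ ≤ (2*D^5)⁻¹ := by
    rw [show (2:ℝ)*(D^6)⁻¹ = 2/D^6 by ring, show ((2:ℝ)*D^5)⁻¹ = 1/(2*D^5) by ring,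
      div_le_div_iff₀ (by positivity) (by positivity)]
    nlinarith [mul_le_mul_of_nonneg_right (show (4:ℝ) ≤ D by linarith)
      (le_of_lt (pow_pos hD0 5))]
  have : (2*D^5)⁻¹ + (2*D^5)⁻¹ = (D^5)⁻¹ := by
    field_simp
    ring
  linarith

/- #### Quadratic-form algebra -/

lemma aux_quad_form_eq {d : ℕ} [NeZero d] (κ : ℝ) (z : Fin d → ℝ) :
    z ⬝ᵥ (hardDiag d κ * hardDiag d κ) *ᵥ z
      = (z 0)^2 + κ^2 * ∑ i ∈ univ.erase 0, (z i)^2 := by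
  unfold hardDiag
  rw [diagonal_mul_diagonal]
  have hmv : ∀ i, ((Matrix.diagonal fun i =>
        (if i = 0 then (1:ℝ) else κ) * (if i = 0 then 1 else κ)) *ᵥ z) i
      = (if i = 0 then (1:ℝ) else κ) * (if i = 0 then 1 else κ) * z i := fun i =>
    mulVec_diagonal _ _ _
  unfold dotProduct
  rw [← Finset.add_sum_erase (univ : Finset (Fin d)) _ (mem_univ 0)]
  rw [hmv 0, if_pos rfl]
  rw [Finset.mul_sum]
  have : ∀ i ∈ univ.erase 0,
      z i * ((Matrix.diagonal fun i =>
        (if i = 0 then (1:ℝ) else κ) * (if i = 0 then 1 else κ)) *ᵥ z) i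
        = κ^2 * (z i)^2 := by
    intro i hi
    rw [hmv i, if_neg (Finset.mem_erase.mp hi).1]
    ring
  rw [Finset.sum_congr rfl this]
  ring

lemma aux_proposalY_erase_sum {d : ℕ} [NeZero d] (α₁ αm β₁ βm : ℝ) (x g : Fin d → ℝ) :
    ∑ i ∈ univ.erase 0, (proposalY α₁ αm β₁ βm x g i)^2
      = (1-αm)^2 * (∑ i ∈ univ.erase 0, (x i)^2)
        + 2*(1-αm)*βm * (∑ i ∈ univ.erase 0, x i * g i)
        + βm^2 * (∑ i ∈ univ.erase 0, (g i)^2) := by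
  have : ∀ i ∈ univ.erase 0, (proposalY α₁ αm β₁ βm x g i)^2
      = (1-αm)^2 * (x i)^2 + (2*(1-αm)*βm) * (x i * g i) + βm^2 * (g i)^2 := by
    intro i hi
    unfold proposalY
    rw [if_neg (Finset.mem_erase.mp hi).1]
    ring
  rw [Finset.sum_congr rfl this, Finset.sum_add_distrib, Finset.sum_add_distrib,
    ← Finset.mul_sum, ← Finset.mul_sum, ← Finset.mul_sum]

end Aux

set_option maxHeartbeats 2000000 in
theorem gaussian_bad_set_accept_bound (C₁ : ℝ) (hC₁ : 1 ≤ C₁) :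
    ∃ c₀ : ℝ, 0 < c₀ ∧ ∃ C₀ : ℝ, 0 < C₀ ∧ ∃ d₀ : ℕ,
      ∀ (d : ℕ) [NeZero d], d₀ ≤ d → ∀ κ : ℝ, 10 ≤ κ →
        ∀ x : Fin d → ℝ,
          Real.sqrt (∑ i ∈ univ.erase 0, (x i) ^ 2) ≤ Real.sqrt (2 * d / (3 * κ)) →
          |x 0| ≤ 5 * Real.sqrt (Real.log d) →
          ∀ α₁ αm β₁ βm h : ℝ, 0 < h →
            |αm| ≤ (3 / 5) * βm ^ 2 * κ →
            C₀ * Real.log d / (κ * d) ≤ βm ^ 2 →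
            |α₁| ≤ C₁ * |αm| →
            β₁ ≤ C₁ * βm →
            ENNReal.ofReal (1 - ((d : ℝ) ^ 5)⁻¹) ≤
              stdGaussianPi d {g : Fin d → ℝ |
                (h / 4) * (x ⬝ᵥ (hardDiag d κ * hardDiag d κ) *ᵥ x) -
                    (h / 4) * (proposalY α₁ αm β₁ βm x g ⬝ᵥ
                      (hardDiag d κ * hardDiag d κ) *ᵥ proposalY α₁ αm β₁ βm x g) ≤
                  -(c₀ * h * κ ^ 2 * βm ^ 2 * d)} := by
  classical
  refine ⟨1/200, by norm_num, 400000, by norm_num, 100000000, ?_⟩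
  intro d _ hd κ hκ x hxs hx0abs α₁ αm β₁ βm h hh hαm hβm hα₁ hβ₁
  have hd' : (100000000:ℝ) ≤ (d:ℝ) := by exact_mod_cast hd
  have hd0 : (0:ℝ) < d := by linarith
  have hκ0 : (0:ℝ) < κ := by linarith
  set L : ℝ := Real.log d with hLdef
  set X : ℝ := ∑ i ∈ univ.erase 0, (x i)^2 with hXdef
  have hL0 : 0 < L := Real.log_pos (by linarith)
  have hX0 : (0:ℝ) ≤ X := Finset.sum_nonneg fun i _ => sq_nonneg _
  set E₁ : Set (Fin d → ℝ) :=
    {g | (17/20)*((d:ℝ)-1) ≤ ∑ i ∈ univ.erase 0, (g i)^2} with hE1def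
  set E₂ : Set (Fin d → ℝ) :=
    {g | |∑ i ∈ univ.erase 0, x i * g i| ≤ Real.sqrt (12 * L * X)} with hE2def
  have hGmeas : Measurable fun g : Fin d → ℝ => ∑ i ∈ univ.erase 0, (g i)^2 :=
    Finset.measurable_sum _ fun i _ => (measurable_pi_apply i).pow_const 2
  have hPmeas : Measurable fun g : Fin d → ℝ => ∑ i ∈ univ.erase 0, x i * g i :=
    Finset.measurable_sum _ fun i _ => measurable_const.mul (measurable_pi_apply i)
  have hE1m : MeasurableSet E₁ := measurableSet_le measurable_const hGmeas
  have hE2m : MeasurableSet E₂ := measurableSet_le hPmeas.abs measurable_const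
  have ht1 : stdGaussianPi d E₁ᶜ ≤ ENNReal.ofReal (Real.exp (-(((d:ℝ)-1)/500))) := by
    refine le_trans (measure_mono ?_) (aux_chisq_tail d)
    intro g hg
    simp only [hE1def, Set.mem_compl_iff, Set.mem_setOf_eq] at hg
    exact le_of_not_ge hg
  have ht2 : stdGaussianPi d E₂ᶜ ≤
      ENNReal.ofReal (((d:ℝ)^6)⁻¹) + ENNReal.ofReal (((d:ℝ)^6)⁻¹) := by
    rcases eq_or_lt_of_le hX0 with hX00 | hXpos
    · have hxz : ∀ i ∈ univ.erase 0, x i = 0 := by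
        intro i hi
        have h0 := (Finset.sum_eq_zero_iff_of_nonneg
          (fun j _ => sq_nonneg (x j))).mp hX00.symm i hi
        exact pow_eq_zero_iff two_ne_zero |>.mp h0
      have hempty : E₂ᶜ = (∅ : Set (Fin d → ℝ)) := by
        ext g
        simp only [Set.mem_compl_iff, Set.mem_empty_iff_false, iff_false, not_not]
        show g ∈ E₂
        have hp0 : ∑ i ∈ univ.erase 0, x i * g i = 0 :=
          Finset.sum_eq_zero fun i hi => by rw [hxz i hi, zero_mul]
        show |∑ i ∈ univ.erase 0, x i * g i| ≤ _
        rw [hp0, abs_zero]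
        exact Real.sqrt_nonneg _
      rw [hempty]
      simp
    · set lam : ℝ := Real.sqrt (12*L) / Real.sqrt X with hlamdef
      have hsX : 0 < Real.sqrt X := Real.sqrt_pos.mpr hXpos
      have hs12 : 0 < Real.sqrt (12*L) := Real.sqrt_pos.mpr (by linarith)
      have hlam : 0 < lam := div_pos hs12 hsX
      have e12 : Real.sqrt (12*L)^2 = 12*L := Real.sq_sqrt (by linarith)
      have eX : Real.sqrt X^2 = X := Real.sq_sqrt hX0
      have hsm : Real.sqrt (12*L*X) = Real.sqrt (12*L) * Real.sqrt X :=
        Real.sqrt_mul (by linarith) X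
      have hexp1 : lam * Real.sqrt (12*L*X) = 12*L := by
        rw [hsm, hlamdef, div_mul_eq_mul_div,
          show Real.sqrt (12*L) * (Real.sqrt (12*L) * Real.sqrt X) = (12*L) * Real.sqrt X by
            linear_combination Real.sqrt X * e12,
          mul_div_assoc, div_self hsX.ne', mul_one]
      have hexp2 : lam^2 * X / 2 = 6*L := by
        rw [hlamdef, div_pow, e12, eX]
        field_simp
        ring
      have hexponent : -(lam * Real.sqrt (12*L*X)) + lam^2 * X / 2 = -(6*L) := by
        rw [hexp1, hexp2]; ring
      have hsub2 : E₂ᶜ ⊆ {g : Fin d → ℝ | Real.sqrt (12*L*X) ≤ ∑ i ∈ univ.erase 0, x i * g i}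
          ∪ {g : Fin d → ℝ | Real.sqrt (12*L*X) ≤ ∑ i ∈ univ.erase 0, (-x i) * g i} := by
        intro g hg
        have hg' : Real.sqrt (12*L*X) < |∑ i ∈ univ.erase 0, x i * g i| := by
          by_contra hcon
          exact hg (le_of_not_gt hcon)
        have hneg : ∑ i ∈ univ.erase 0, (-x i) * g i
            = -∑ i ∈ univ.erase 0, x i * g i := by
          rw [← Finset.sum_neg_distrib]
          exact Finset.sum_congr rfl fun i _ => by ring
        rcases le_or_gt 0 (∑ i ∈ univ.erase 0, x i * g i) with hp | hp
        · left
          rw [abs_of_nonneg hp] at hg'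
          exact le_of_lt hg'
        · right
          rw [abs_of_neg hp] at hg'
          rw [Set.mem_setOf_eq, hneg]
          exact le_of_lt hg'
      refine le_trans (measure_mono hsub2) (le_trans (measure_union_le _ _) ?_)
      have hb1 := aux_lin_tail d x lam (Real.sqrt (12*L*X)) hlam
      have hb2 := aux_lin_tail d (fun i => -x i) lam (Real.sqrt (12*L*X)) hlam
      have hXneg : ∑ i ∈ univ.erase 0, (-x i)^2 = X := by
        rw [hXdef]
        exact Finset.sum_congr rfl fun i _ => by ring
      rw [hXneg] at hb2
      rw [← hXdef] at hb1
      have hexp6 : Real.exp (-(lam * Real.sqrt (12*L*X)) + lam^2 * X / 2)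
          = ((d:ℝ)^6)⁻¹ := by
        rw [hexponent, show (6:ℝ)*L = ((6:ℕ):ℝ)*L by norm_num, Real.exp_neg,
          Real.exp_nat_mul, hLdef, Real.exp_log hd0]
      rw [show lam^2 * X / 2 = lam^2 * X/2 from rfl] at hb1 hb2
      rw [hexp6] at hb1 hb2
      exact add_le_add hb1 hb2
  have htail : stdGaussianPi d (E₁ ∩ E₂)ᶜ ≤ ENNReal.ofReal (((d:ℝ)^5)⁻¹) := by
    rw [Set.compl_inter]
    refine le_trans (measure_union_le _ _) ?_
    refine le_trans (add_le_add ht1 ht2) ?_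
    rw [← ENNReal.ofReal_add (by positivity) (by positivity),
      ← ENNReal.ofReal_add (Real.exp_nonneg _) (by positivity)]
    refine ENNReal.ofReal_le_ofReal ?_
    have := aux_tail_numeric hd'
    linarith
  have hsub : E₁ ∩ E₂ ⊆ {g : Fin d → ℝ |
      (h / 4) * (x ⬝ᵥ (hardDiag d κ * hardDiag d κ) *ᵥ x) -
          (h / 4) * (proposalY α₁ αm β₁ βm x g ⬝ᵥ
            (hardDiag d κ * hardDiag d κ) *ᵥ proposalY α₁ αm β₁ βm x g) ≤
        -(1/200 * h * κ ^ 2 * βm ^ 2 * d)} := by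
    rintro g ⟨hg1, hg2⟩
    rw [hE1def, Set.mem_setOf_eq] at hg1
    rw [hE2def, Set.mem_setOf_eq] at hg2
    rw [Set.mem_setOf_eq, aux_quad_form_eq, aux_quad_form_eq, aux_proposalY_erase_sum]
    have hXb : 3 * (κ * X) ≤ 2 * (d:ℝ) := by
      have h1 : X ≤ 2*(d:ℝ)/(3*κ) := by
        have h2 := pow_le_pow_left₀ (Real.sqrt_nonneg X) hxs 2
        rwa [Real.sq_sqrt hX0, Real.sq_sqrt (by positivity)] at h2
      have h2 := mul_le_mul_of_nonneg_left h1 (by positivity : (0:ℝ) ≤ 3*κ)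
      rw [show (3*κ) * (2*(d:ℝ)/(3*κ)) = 2*(d:ℝ) by field_simp] at h2
      linarith
    have hx0sq : (x 0)^2 ≤ 25 * L := by
      have h1 := pow_le_pow_left₀ (abs_nonneg (x 0)) hx0abs 2
      rw [sq_abs] at h1
      have h2 : (5 * Real.sqrt L)^2 = 25 * L := by
        rw [mul_pow, Real.sq_sqrt hL0.le]; ring
      rw [hLdef] at h2 ⊢
      linarith [h1, h2.le, h2.ge]
    have hbβ : 400000 * L ≤ βm^2 * (κ*(d:ℝ)) := by
      have h1 := (div_le_iff₀ (by positivity : (0:ℝ) < κ*(d:ℝ))).mp hβm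
      rw [hLdef]
      linarith
    have hLD : 1000 * L ≤ (d:ℝ) := by
      have h1 : L ≤ 2*Real.sqrt d := aux_log_le_two_sqrt (by linarith)
      have hr : (10000:ℝ) ≤ Real.sqrt d := by
        rw [show (10000:ℝ) = Real.sqrt (10000^2) from (Real.sqrt_sq (by norm_num)).symm]
        exact Real.sqrt_le_sqrt (by norm_num; linarith)
      nlinarith [Real.sq_sqrt hd0.le]
    have core := aux_core_ineq (d:ℝ) κ αm βm (x 0) (proposalY α₁ αm β₁ βm x g 0) L X
      (∑ i ∈ univ.erase 0, x i * g i) (∑ i ∈ univ.erase 0, (g i)^2)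
      hd' hκ hL0 hLD hX0 hXb hx0sq hαm hbβ hg1 hg2
    have hmul := mul_le_mul_of_nonneg_left core (by linarith : (0:ℝ) ≤ h/4)
    rw [← hXdef]
    linarith [hmul]
  refine le_trans ?_ (measure_mono hsub)
  have hEm : MeasurableSet (E₁ ∩ E₂) := hE1m.inter hE2m
  have hcompl : stdGaussianPi d (E₁ ∩ E₂) + stdGaussianPi d (E₁ ∩ E₂)ᶜ = 1 := by
    rw [measure_add_measure_compl hEm, measure_univ]
  have hinv1 : ((d:ℝ)^5)⁻¹ ≤ 1 := by
    rw [inv_le_one_iff₀]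
    right
    exact one_le_pow₀ (by linarith)
  have key : ENNReal.ofReal (1 - ((d:ℝ)^5)⁻¹) + stdGaussianPi d (E₁ ∩ E₂)ᶜ
      ≤ stdGaussianPi d (E₁ ∩ E₂) + stdGaussianPi d (E₁ ∩ E₂)ᶜ := by
    rw [hcompl]
    refine le_trans (add_le_add_right htail _) ?_
    rw [← ENNReal.ofReal_add (by linarith) (by positivity), sub_add_cancel,
      ENNReal.ofReal_one]
  exact ENNReal.le_of_add_le_add_right (measure_ne_top _ _) key
end
end
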